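/- Let m_0 be the Lie algebra (treated as a Leibniz algebra) with basis {e_1, e_2, ...} and nonzero products [e_i, e_1] = e_{i+1} = -[e_1, e_i] for i ≥ 2. Every derivation d of m_0 has the form d(e_1) = Σ_{i=1}^{t} α_i e_i and d(e_k) = ((k-2)α_1 + β_2) e_k + Σ_{i=3}^{t} β_i e_{i+k-2} for k ≥ 2, for some scalars α_i, β_i with only finitely many nonzero. -/
import Mathlib


noncomputable section

/-- The underlying space; the basis vector `e_i` (i ≥ 1) is `Finsupp.single (i-1) 1`. -/
abbrev V : Type := ℕ →₀ ℂ

/-- Shift-up map: `single n ↦ single (n+1)` for `n ≥ 1` (i.e. `e_i ↦ e_{i+1}` for `i ≥ 2`). -/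
def sh1 : V →ₗ[ℂ] V :=
  Finsupp.lsum ℂ fun n => if 1 ≤ n then (Finsupp.lsingle (n + 1) : ℂ →ₗ[ℂ] V) else 0

/-- Bracket of the filiform Lie algebra `m₀`: `[e_i, e_1] = e_{i+1} = -[e_1, e_i]` for
`i ≥ 2`, all other brackets of basis vectors zero (here `e_1` has coordinate index 0). -/
def brM (f g : V) : V := g 0 • sh1 f - f 0 • sh1 g

lemma sh1_single (n : ℕ) (c : ℂ) :
    sh1 (Finsupp.single n c) = if 1 ≤ n then Finsupp.single (n + 1) c else 0 := by
  simp only [sh1, Finsupp.lsum_single]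
  split <;> simp

lemma eq_sum_single_of_support_subset (f : V) (t : ℕ) (h : f.support ⊆ Finset.range t) :
    f = ∑ n ∈ Finset.range t, Finsupp.single n (f n) := by
  conv_lhs => rw [← Finsupp.sum_single f]
  rw [Finsupp.sum]
  exact Finset.sum_subset h (fun x _ hx => by
    rw [Finsupp.notMem_support_iff.mp hx, Finsupp.single_zero])

/-- Every derivation of `m₀` has the form `d(e_1) = Σ_{i=1}^{t} α_i e_i` and
`d(e_k) = ((k-2)α₁ + β₂) e_k + Σ_{i=3}^{t} β_i e_{i+k-2}` for `k ≥ 2`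
(with `e_j = single (j-1)`, so `e_{i+k-2} = single (i+k-3)`). -/
theorem stmt11 (d : V →ₗ[ℂ] V)
    (hd : ∀ x y : V, d (brM x y) = brM (d x) y + brM x (d y)) :
    ∃ (t : ℕ) (α β : ℕ → ℂ),
      d (Finsupp.single 0 1) = ∑ i ∈ Finset.Icc 1 t, α i • Finsupp.single (i - 1) (1 : ℂ) ∧
      ∀ k : ℕ, 2 ≤ k →
        d (Finsupp.single (k - 1) 1) =
          (((k : ℂ) - 2) * α 1 + β 2) • Finsupp.single (k - 1) (1 : ℂ) +
            ∑ i ∈ Finset.Icc 3 t, β i • Finsupp.single (i + k - 3) (1 : ℂ) := by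
  classical
  -- the coefficient of e₁ in d(e₂) vanishes
  have hc : (d (Finsupp.single 1 1)) 0 = 0 := by
    have h := hd (Finsupp.single 1 1) (Finsupp.single 2 1)
    simp [brM, sh1_single, Finsupp.single_apply] at h
    have h3 := congrArg (fun v : V => v 3) h
    simpa [Finsupp.single_apply] using h3
  -- the recursion d(e_{k+1}) = sh1 (d e_k) + α₁ e_{k+1}
  have hrec : ∀ n : ℕ, 1 ≤ n → d (Finsupp.single (n+1) 1) =
      sh1 (d (Finsupp.single n 1)) +
        Finsupp.single (n+1) ((d (Finsupp.single 0 1)) 0) := by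
    intro n hn
    have h := hd (Finsupp.single n 1) (Finsupp.single 0 1)
    simpa [brM, sh1_single, Finsupp.single_apply, (show ¬ n = 0 by omega), hn,
      Finsupp.smul_single'] using h
  set t : ℕ :=
    ((d (Finsupp.single 0 1)).support ∪ (d (Finsupp.single 1 1)).support).sup id + 2 with ht
  have ht2 : 2 ≤ t := by omega
  have ht0 : (d (Finsupp.single 0 1)).support ⊆ Finset.range t := by
    intro n hn
    have h := Finset.le_sup (f := id) (Finset.mem_union_left
      (d (Finsupp.single 1 1)).support hn)
    simp only [id] at h
    simp only [Finset.mem_range]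
    omega
  have ht1 : (d (Finsupp.single 1 1)).support ⊆ Finset.range t := by
    intro n hn
    have h := Finset.le_sup (f := id) (Finset.mem_union_right
      (d (Finsupp.single 0 1)).support hn)
    simp only [id] at h
    simp only [Finset.mem_range]
    omega
  -- the key formula for d(e_k), with k = m+1 (so index m ≥ 1)
  have hmain : ∀ m : ℕ, 1 ≤ m → d (Finsupp.single m 1) =
      Finsupp.single m (((m : ℂ) - 1) * (d (Finsupp.single 0 1)) 0
          + (d (Finsupp.single 1 1)) 1)
        + ∑ i ∈ Finset.Icc 3 t,
            Finsupp.single (i + m - 2) ((d (Finsupp.single 1 1)) (i - 1)) := by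
    intro m hm
    induction m, hm using Nat.le_induction with
    | base =>
      have hbase : d (Finsupp.single 1 1)
          = ∑ n ∈ Finset.range t, Finsupp.single n ((d (Finsupp.single 1 1)) n) :=
        eq_sum_single_of_support_subset _ t ht1
      conv_lhs => rw [hbase]
      have h1 : ∑ n ∈ Finset.range t, Finsupp.single n ((d (Finsupp.single 1 1)) n)
          = ∑ n ∈ Finset.Ico 1 t, Finsupp.single n ((d (Finsupp.single 1 1)) n) := by
        rw [Finset.range_eq_Ico]
        refine (Finset.sum_subset (Finset.Ico_subset_Ico (by omega) le_rfl)
          fun x hx hx' => ?_).symm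
        have hx0 : x = 0 := by
          simp only [Finset.mem_Ico] at hx hx'
          omega
        rw [hx0, hc, Finsupp.single_zero]
      rw [h1, Finset.sum_eq_sum_Ico_succ_bot (by omega : 1 < t)]
      have h2 : ∑ n ∈ Finset.Ico 2 t, Finsupp.single n ((d (Finsupp.single 1 1)) n)
          = ∑ i ∈ Finset.Icc 3 t,
              Finsupp.single (i + 1 - 2) ((d (Finsupp.single 1 1)) (i - 1)) := by
        refine Finset.sum_nbij' (i := fun n => n + 1) (j := fun i => i - 1)
          ?_ ?_ ?_ ?_ ?_
        · intro a ha; simp only [Finset.mem_Ico] at ha; simp only [Finset.mem_Icc]; omega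
        · intro a ha; simp only [Finset.mem_Icc] at ha; simp only [Finset.mem_Ico]; omega
        · intro a ha; show a + 1 - 1 = a; omega
        · intro a ha; simp only [Finset.mem_Icc] at ha; show a - 1 + 1 = a; omega
        · intro a ha
          simp only [show a + 1 + 1 - 2 = a from by omega, show a + 1 - 1 = a from by omega]
      rw [h2]
      congr 1
      norm_num
    | succ m hm ih =>
      have hs : ∑ i ∈ Finset.Icc 3 t,
            sh1 (Finsupp.single (i + m - 2) ((d (Finsupp.single 1 1)) (i - 1)))
          = ∑ i ∈ Finset.Icc 3 t,
              Finsupp.single (i + (m + 1) - 2) ((d (Finsupp.single 1 1)) (i - 1)) := by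
        refine Finset.sum_congr rfl fun i hi => ?_
        rw [Finset.mem_Icc] at hi
        rw [sh1_single, if_pos (by omega)]
        congr 1
        omega
      rw [hrec m hm, ih, map_add, map_sum, hs, sh1_single, if_pos hm]
      rw [add_right_comm, ← Finsupp.single_add]
      congr 2
      push_cast
      ring
  refine ⟨t, fun i => (d (Finsupp.single 0 1)) (i - 1),
    fun i => (d (Finsupp.single 1 1)) (i - 1), ?_, ?_⟩
  · conv_lhs => rw [eq_sum_single_of_support_subset _ t ht0]
    refine Finset.sum_nbij' (i := fun n => n + 1) (j := fun i => i - 1) ?_ ?_ ?_ ?_ ?_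
    · intro a ha; simp only [Finset.mem_range] at ha; simp only [Finset.mem_Icc]; omega
    · intro a ha; simp only [Finset.mem_Icc] at ha; simp only [Finset.mem_range]; omega
    · intro a ha; show a + 1 - 1 = a; omega
    · intro a ha; simp only [Finset.mem_Icc] at ha; show a - 1 + 1 = a; omega
    · intro a ha
      simp only [show a + 1 - 1 = a from by omega, Finsupp.smul_single', mul_one]
  · intro k hk
    have h := hmain (k - 1) (by omega)
    rw [h]
    congr 1
    · rw [Finsupp.smul_single', mul_one]
      congr 1
      simp only [show (1:ℕ) - 1 = 0 from rfl, show (2:ℕ) - 1 = 1 from rfl]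
      rw [Nat.cast_sub (by omega : 1 ≤ k)]
      push_cast
      ring
    · refine Finset.sum_congr rfl fun i hi => ?_
      rw [Finset.mem_Icc] at hi
      rw [Finsupp.smul_single', mul_one]
      have hix : i + (k - 1) - 2 = i + k - 3 := by omega
      rw [hix]
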